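/- arXiv:1608.06033 — 2 statements merged into one kernel-verified Lean document; each statement's English description precedes it below -/
import Mathlib

section
/- Let f(n) = ⌊(2n+1)/3⌋, and define f^(0)(n) = n, f^(i+1)(n) = f(f^(i)(n)). Then for any integer ℓ ≥ log_{3/2} n and any integer n ≥ 1, f^(ℓ)(n) = 1. -/
/-!
Measure the distance of `m` to the fixed point `1` by `m - 1`. Each application of
`f m = ⌊(2m+1)/3⌋` shrinks this distance by a factor `2/3`, so after `ℓ` steps it is at most
`(2/3)^ℓ (n - 1) < 1` as soon as `n ≤ (3/2)^ℓ`, i.e. `logb (3/2) n ≤ ℓ`; and `f` never leaves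
the positive integers.
-/

lemma pow_mul_iterate_le {α : Type*} (f : α → α) (d : α → ℕ) {a b : ℕ}
    (h : ∀ x, b * d (f x) ≤ a * d x) (x : α) (k : ℕ) :
    b ^ k * d (f^[k] x) ≤ a ^ k * d x := by
  induction k with
  | zero => simp
  | succ k ih =>
    rw [Function.iterate_succ_apply']
    calc b ^ (k + 1) * d (f (f^[k] x)) = b ^ k * (b * d (f (f^[k] x))) := by ring
      _ ≤ b ^ k * (a * d (f^[k] x)) := Nat.mul_le_mul_left _ (h _)
      _ = a * (b ^ k * d (f^[k] x)) := by ring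
      _ ≤ a * (a ^ k * d x) := Nat.mul_le_mul_left _ ih
      _ = a ^ (k + 1) * d x := by ring

lemma mul_pow_le_pow_of_logb_div_le {a b n ℓ : ℕ} (ha : 0 < a) (hab : a < b) (hn : 0 < n)
    (hℓ : Real.logb (b / a) n ≤ ℓ) : n * a ^ ℓ ≤ b ^ ℓ := by
  have ha' : (0 : ℝ) < a := by exact_mod_cast ha
  have hba : (1 : ℝ) < b / a := by
    rw [one_lt_div ha']
    exact_mod_cast hab
  have hpow : (n : ℝ) ≤ ((b : ℝ) / a) ^ ℓ := by
    rw [← Real.rpow_natCast]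
    exact (Real.logb_le_iff_le_rpow hba (by exact_mod_cast hn)).mp hℓ
  rw [div_pow, le_div_iff₀ (by positivity)] at hpow
  exact_mod_cast hpow

theorem stmt_0 (f : ℕ → ℕ) (hf : ∀ n, f n = (2 * n + 1) / 3)
    (n : ℕ) (hn : 1 ≤ n) (ℓ : ℕ) (hℓ : Real.logb (3/2) n ≤ ℓ) :
    f^[ℓ] n = 1 := by
  have hpos : 1 ≤ f^[ℓ] n := by
    refine Set.MapsTo.iterate (s := Set.Ici 1) (fun m (hm : 1 ≤ m) => ?_) ℓ hn
    simp only [Set.mem_Ici, hf]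
    omega
  have hdist : 3 ^ ℓ * (f^[ℓ] n - 1) ≤ 2 ^ ℓ * (n - 1) :=
    pow_mul_iterate_le f (· - 1) (fun m => by simp only [hf]; omega) n ℓ
  have hsize : n * 2 ^ ℓ ≤ 3 ^ ℓ :=
    mul_pow_le_pow_of_logb_div_le (a := 2) (b := 3) (by norm_num) (by norm_num) hn
      (by exact_mod_cast hℓ)
  have hlt : 2 ^ ℓ * (n - 1) < 3 ^ ℓ := by
    calc 2 ^ ℓ * (n - 1) < 2 ^ ℓ * n := by
          gcongr
          omega
      _ ≤ 3 ^ ℓ := mul_comm n (2 ^ ℓ) ▸ hsize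
  have : f^[ℓ] n - 1 < 1 :=
    Nat.lt_of_mul_lt_mul_left (a := 3 ^ ℓ) (by rw [mul_one]; exact hdist.trans_lt hlt)
  omega
end

section
/- Starting from k = n competitors and repeatedly applying ℓ = ⌊log_{3/2} n⌋ + 1 sifters with bound f(k) = ⌊(2k+1)/3⌋, at most one winner remains; i.e., f^(⌊log_{3/2} n⌋ + 1)(n) = 1 for every n ≥ 1. -/
/-!
Each application of `k ↦ ⌊(2k+1)/3⌋` shrinks the distance `k - 1` to the fixed point `1` by at
least a factor `2/3` and never leaves `{k ≥ 1}`. After `m` steps the distance is therefore at most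
`(2/3)^m (n - 1)`, which is `< 1` once `n < (3/2)^m`, and `m = ⌊log_{3/2} n⌋ + 1` is such an `m`.
-/

open Real

theorem Real.lt_pow_floor_logb_add_one {b x : ℝ} (hb : 1 < b) (hx : 0 < x) :
    x < b ^ (⌊logb b x⌋₊ + 1) := by
  have hlt : logb b x < ((⌊logb b x⌋₊ + 1 : ℕ) : ℝ) := by
    push_cast
    exact Nat.lt_floor_add_one _
  rwa [logb_lt_iff_lt_rpow hb hx, rpow_natCast] at hlt

theorem Nat.two_pow_mul_lt_three_pow {n m : ℕ} (h : (n : ℝ) < (3 / 2) ^ m) :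
    2 ^ m * n < 3 ^ m := by
  rw [div_pow, lt_div_iff₀ (by positivity), mul_comm] at h
  exact_mod_cast h

theorem Function.three_pow_mul_iterate_sub_one_le {f : ℕ → ℕ}
    (hf : ∀ k, 3 * (f k - 1) ≤ 2 * (k - 1)) (n m : ℕ) :
    3 ^ m * (f^[m] n - 1) ≤ 2 ^ m * (n - 1) := by
  induction m with
  | zero => simp
  | succ m ih =>
    rw [Function.iterate_succ_apply']
    calc 3 ^ (m + 1) * (f (f^[m] n) - 1)
        = 3 ^ m * (3 * (f (f^[m] n) - 1)) := by ring
      _ ≤ 3 ^ m * (2 * (f^[m] n - 1)) := Nat.mul_le_mul_left _ (hf _)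
      _ = 2 * (3 ^ m * (f^[m] n - 1)) := by ring
      _ ≤ 2 * (2 ^ m * (n - 1)) := Nat.mul_le_mul_left _ ih
      _ = 2 ^ (m + 1) * (n - 1) := by ring

theorem stmt_18 (f : ℕ → ℕ) (hf : ∀ k, f k = (2 * k + 1) / 3)
    (n : ℕ) (hn : 1 ≤ n) :
    f^[⌊Real.logb (3/2) n⌋₊ + 1] n = 1 := by
  set m := ⌊Real.logb (3/2) n⌋₊ + 1
  have hcontract : ∀ k, 3 * (f k - 1) ≤ 2 * (k - 1) := fun k => by rw [hf]; omega
  have hmaps : Set.MapsTo f (Set.Ici 1) (Set.Ici 1) := fun k (hk : 1 ≤ k) => by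
    change 1 ≤ f k
    rw [hf]
    omega
  have hpos : 1 ≤ f^[m] n := hmaps.iterate m hn
  have hsmall : 2 ^ m * n < 3 ^ m :=
    Nat.two_pow_mul_lt_three_pow
      (Real.lt_pow_floor_logb_add_one (by norm_num) (by exact_mod_cast hn))
  have hclose : 3 ^ m * (f^[m] n - 1) < 3 ^ m * 1 :=
    calc 3 ^ m * (f^[m] n - 1) ≤ 2 ^ m * (n - 1) :=
          Function.three_pow_mul_iterate_sub_one_le hcontract n m
      _ ≤ 2 ^ m * n := Nat.mul_le_mul_left _ (Nat.sub_le n 1)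
      _ < 3 ^ m * 1 := by rwa [mul_one]
  have := Nat.lt_of_mul_lt_mul_left hclose
  omega
end
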